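/- The invertible elements of the irrational rotation algebra A are exactly the nonzero scalar multiples of the basis elements: A^× = { μ a_{pq} : μ ∈ ℂ^×, p,q ∈ ℤ }. -/

import Mathlib

/-!
In the basis `a_{nl}` the product of two basis vectors is a nonzero multiple of a basis vector,
so `A` is a twisted group algebra of `ℤ × ℤ`. Since `ℤ × ℤ` has the two-unique-sums property
(it is orderable), if nonzero `x` and `y` are not both monomials then two distinct indices of
`x * y` are reached by exactly one pair of support indices each; no cancellation can
occur there, so `x * y` has at least two nonzero coefficients. Applied to `u * u⁻¹ = 1`,
whose support is `{(0, 0)}`, this shows every unit is a monomial; conversely `a_{pq}` is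
invertible with inverse a multiple of `a_{-p,-q}`.
-/

open Finset

namespace Module.Basis

section Coefficients

variable {G k A : Type*} [Add G] [CommSemiring k] [Semiring A] [Algebra k A]
  {b : Basis G k A} {c : G → G → k}

theorem repr_mul_apply [DecidableEq G] (hmul : ∀ i j, b i * b j = c i j • b (i + j)) (x y : A) (g : G) :
    b.repr (x * y) g = ∑ i ∈ (b.repr x).support, ∑ j ∈ (b.repr y).support,
      if i + j = g then b.repr x i * b.repr y j * c i j else 0 := by
  conv_lhs => rw [← b.linearCombination_repr x, ← b.linearCombination_repr y]
  simp only [Finsupp.linearCombination_apply, Finsupp.sum, sum_mul_sum, smul_mul_smul_comm,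
    hmul, smul_smul, map_sum, Finsupp.finsetSum_apply, map_smul, b.repr_self,
    Finsupp.smul_apply, Finsupp.single_apply, smul_eq_mul, mul_ite, mul_one, mul_zero]

theorem repr_mul_apply_of_uniqueAdd (hmul : ∀ i j, b i * b j = c i j • b (i + j)) {x y : A}
    {i j : G} (hi : i ∈ (b.repr x).support) (hj : j ∈ (b.repr y).support)
    (huniq : UniqueAdd (b.repr x).support (b.repr y).support i j) :
    b.repr (x * y) (i + j) = b.repr x i * b.repr y j * c i j := by
  classical
  rw [repr_mul_apply hmul, sum_eq_single_of_mem i hi, sum_eq_single_of_mem j hj, if_pos rfl]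
  · exact fun j' hj' hne => if_neg fun h => hne (huniq hi hj' h).2
  · exact fun i' hi' hne => sum_eq_zero fun j' hj' => if_neg fun h => hne (huniq hi' hj' h).1

end Coefficients

variable {G k A : Type*} [Field k] [Ring A] [Algebra k A] {b : Basis G k A} {c : G → G → k}

theorem card_support_repr_eq_one_of_mul [Add G] [TwoUniqueSums G] (hc : ∀ i j, c i j ≠ 0)
    (hmul : ∀ i j, b i * b j = c i j • b (i + j)) {x y : A} (hx : x ≠ 0) (hy : y ≠ 0)
    (hxy : #(b.repr (x * y)).support ≤ 1) : #(b.repr x).support = 1 := by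
  set S := (b.repr x).support
  set T := (b.repr y).support
  have hS : 0 < #S := card_pos.2 (Finsupp.support_nonempty_iff.2 (b.repr.map_ne_zero_iff.2 hx))
  have hT : 0 < #T := card_pos.2 (Finsupp.support_nonempty_iff.2 (b.repr.map_ne_zero_iff.2 hy))
  have mem_support : ∀ {i j}, i ∈ S → j ∈ T → UniqueAdd S T i j →
      i + j ∈ (b.repr (x * y)).support := fun hi hj hu => by
    rw [Finsupp.mem_support_iff, repr_mul_apply_of_uniqueAdd hmul hi hj hu]
    exact mul_ne_zero (mul_ne_zero (Finsupp.mem_support_iff.1 hi) (Finsupp.mem_support_iff.1 hj))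
      (hc _ _)
  suffices ¬ 1 < #S * #T by nlinarith
  intro hST
  obtain ⟨p, hp, q, hq, hpq, hup, huq⟩ := TwoUniqueSums.uniqueAdd_of_one_lt_card hST
  rw [mem_product] at hp hq
  have hsum : q.1 + q.2 = p.1 + p.2 :=
    card_le_one.1 hxy _ (mem_support hq.1 hq.2 huq) _ (mem_support hp.1 hp.2 hup)
  exact hpq (Prod.ext_iff.2 (hup hq.1 hq.2 hsum)).symm

section AddMonoid

variable [AddMonoid G]

theorem cocycle_zero_left (hc : ∀ i j, c i j ≠ 0) (hmul : ∀ i j, b i * b j = c i j • b (i + j))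
    (i : G) : c 0 i = c 0 0 := by
  have h := mul_assoc (b 0) (b 0) (b i)
  simp only [hmul, zero_add, smul_mul_assoc, mul_smul_comm, smul_smul] at h
  exact (mul_right_cancel₀ (hc 0 i) (smul_left_injective k (b.ne_zero i) h)).symm

theorem apply_zero_eq_smul_one (hc : ∀ i j, c i j ≠ 0)
    (hmul : ∀ i j, b i * b j = c i j • b (i + j)) : b 0 = c 0 0 • 1 := by
  have h : LinearMap.mulLeft k (b 0) = c 0 0 • LinearMap.id :=
    b.ext fun i => by simp [hmul, cocycle_zero_left hc hmul i]
  simpa using LinearMap.congr_fun h 1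

theorem card_support_repr_one (hc : ∀ i j, c i j ≠ 0)
    (hmul : ∀ i j, b i * b j = c i j • b (i + j)) : #(b.repr 1).support = 1 := by
  have h : (1 : A) = (c 0 0)⁻¹ • b 0 := by
    rw [apply_zero_eq_smul_one hc hmul, smul_smul, inv_mul_cancel₀ (hc 0 0), one_smul]
  rw [h, map_smul, b.repr_self, Finsupp.smul_single, smul_eq_mul, mul_one,
    Finsupp.support_single _ (inv_ne_zero (hc 0 0)), card_singleton]

end AddMonoid

variable [AddGroup G]

theorem isUnit_apply (hc : ∀ i j, c i j ≠ 0) (hmul : ∀ i j, b i * b j = c i j • b (i + j))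
    (g : G) : IsUnit (b g) := by
  have h1 := apply_zero_eq_smul_one hc hmul
  refine isUnit_iff_exists_and_exists.2
    ⟨⟨(c g (-g) * c 0 0)⁻¹ • b (-g), ?_⟩, ⟨(c (-g) g * c 0 0)⁻¹ • b (-g), ?_⟩⟩
  · rw [mul_smul_comm, hmul, add_neg_cancel, h1, smul_smul, smul_smul,
      mul_assoc, inv_mul_cancel₀ (mul_ne_zero (hc _ _) (hc _ _)), one_smul]
  · rw [smul_mul_assoc, hmul, neg_add_cancel, h1, smul_smul, smul_smul,
      mul_assoc, inv_mul_cancel₀ (mul_ne_zero (hc _ _) (hc _ _)), one_smul]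

theorem isUnit_iff_exists_smul [TwoUniqueSums G] (hc : ∀ i j, c i j ≠ 0)
    (hmul : ∀ i j, b i * b j = c i j • b (i + j)) {x : A} :
    IsUnit x ↔ ∃ (μ : k) (g : G), μ ≠ 0 ∧ x = μ • b g := by
  constructor
  · rintro ⟨u, rfl⟩
    have : Nontrivial A := nontrivial_of_ne (b 0) 0 (b.ne_zero 0)
    have hu : #(b.repr ((u : A) * ↑u⁻¹)).support ≤ 1 := by
      rw [u.mul_inv, card_support_repr_one hc hmul]
    obtain ⟨g, μ, hμ, h⟩ := Finsupp.card_support_eq_one'.1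
      (card_support_repr_eq_one_of_mul hc hmul u.ne_zero u⁻¹.ne_zero hu)
    exact ⟨μ, g, hμ, by rw [← b.repr_symm_single, ← h, b.repr.symm_apply_apply]⟩
  · rintro ⟨μ, g, hμ, rfl⟩
    exact (isUnit_apply hc hmul g).smul (Units.mk0 μ hμ)

end Module.Basis

theorem rotationAlgebra_units
    (lam : ℝ)
    (A : Type) [Ring A] [Algebra ℂ A]
    (a : ℤ → ℤ → A)
    (b : Module.Basis (ℤ × ℤ) ℂ A) (hb : ∀ n l : ℤ, b (n, l) = a n l)
    (hmul : ∀ n₁ l₁ n₂ l₂ : ℤ,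
      a n₁ l₁ * a n₂ l₂ =
        Complex.exp (Complex.I * (lam * n₁ * l₂)) • a (n₁ + n₂) (l₁ + l₂)) :
    ∀ x : A, IsUnit x ↔ ∃ (μ : ℂ) (p q : ℤ), μ ≠ 0 ∧ x = μ • a p q := by
  intro x
  have hmul' : ∀ i j : ℤ × ℤ, b i * b j =
      Complex.exp (Complex.I * (lam * i.1 * j.2)) • b (i + j) := fun i j => by
    simp only [hb, hmul, Prod.fst_add, Prod.snd_add]
  rw [b.isUnit_iff_exists_smul (fun _ _ => Complex.exp_ne_zero _) hmul']
  simp only [Prod.exists, hb]
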